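/- arXiv:2011.04363 — 2 statements merged into one kernel-verified Lean document; each statement's English description precedes it below -/
import Mathlib

section
/- Let F ⊆ ℝⁿ be bounded and 0 < θ < φ ≤ 1. Then the upper φ-intermediate dimension of F is at most (upper θ-intermediate dimension of F) + (1 − θ/φ)·(n − upper θ-intermediate dimension of F), and similarly for lower intermediate dimensions. -/
open Set Metric MeasureTheory ENNReal

/-- A cover of `F` witnessing the `θ`-intermediate dimension sum condition at scale `δ`:
a countable cover by sets of diameter between `δ^(1/θ)` and `δ` whose `s`-power diameter
sum is at most `ε`.  (When `θ = 0` the lower bound on diameters is vacuous, recovering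
the Hausdorff dimension condition.) -/
def interCoverSum {X : Type*} [PseudoMetricSpace X]
    (θ δ s ε : ℝ) (F : Set X) : Prop :=
  ∃ 𝒰 : Set (Set X), 𝒰.Countable ∧ F ⊆ ⋃₀ 𝒰 ∧
    (∀ U ∈ 𝒰, EMetric.diam U ≤ ENNReal.ofReal δ ∧
      (θ ≠ 0 → ENNReal.ofReal (δ ^ (1 / θ)) ≤ EMetric.diam U)) ∧
    ∑' U : 𝒰, EMetric.diam (U : Set X) ^ s ≤ ENNReal.ofReal ε

/-- The lower `θ`-intermediate dimension of `F`. -/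
noncomputable def lowerInterDim {X : Type*} [PseudoMetricSpace X] (θ : ℝ) (F : Set X) : ℝ :=
  sInf {s : ℝ | 0 ≤ s ∧ ∀ ε > 0, ∀ δ₀ > 0, ∃ δ, 0 < δ ∧ δ ≤ δ₀ ∧ interCoverSum θ δ s ε F}

/-- The upper `θ`-intermediate dimension of `F`. -/
noncomputable def upperInterDim {X : Type*} [PseudoMetricSpace X] (θ : ℝ) (F : Set X) : ℝ :=
  sInf {s : ℝ | 0 ≤ s ∧ ∀ ε > 0, ∃ δ₀ > 0, ∀ δ, 0 < δ → δ ≤ δ₀ → interCoverSum θ δ s ε F}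

/-- Lower box-counting dimension: the `θ = 1` lower intermediate dimension, i.e. covers
by sets all of the same diameter. -/
noncomputable def lowerBoxDim {X : Type*} [PseudoMetricSpace X] (F : Set X) : ℝ :=
  lowerInterDim 1 F

/-- Upper box-counting dimension: the `θ = 1` upper intermediate dimension. -/
noncomputable def upperBoxDim {X : Type*} [PseudoMetricSpace X] (F : Set X) : ℝ :=
  upperInterDim 1 F

/-!
Cover each set `U` of a `θ`-admissible cover at scale `ρ = δ ^ (θ / φ)` with `diam U > δ` by
at most `5ⁿ (diam U / δ)ⁿ` balls of diameter `δ` (a volume argument), and keep the other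
sets.  Since `δ ^ (1 / φ) = ρ ^ (1 / θ) ≤ diam U ≤ ρ`, the new cover is `φ`-admissible at
scale `δ`, and for `t = (θ / φ) s + (1 - θ / φ) n` the exponents balance:
`ρ ^ (n - s) δ ^ (t - n) = 1`, so the new `t`-sum is at most `5ⁿ` times the old `s`-sum.
Hence `s ↦ t` maps admissible exponents for `θ` into those for `φ`, and bounded sets have
every exponent above `n` admissible.
-/

open Filter Topology Module

theorem csInf_le_mul_csInf_add {S T : Set ℝ} {c n : ℝ} (hc : 0 ≤ c) (hSne : S.Nonempty)
    (hT : BddBelow T) (hTn : ∀ η > 0, n + η ∈ T)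
    (hST : ∀ s ∈ S, s ≤ n → c * s + (1 - c) * n ∈ T) :
    sInf T ≤ c * sInf S + (1 - c) * n := by
  have hTle : sInf T ≤ n := le_of_forall_pos_le_add fun η hη => csInf_le hT (hTn η hη)
  have hTS : ∀ s ∈ S, sInf T ≤ c * s + (1 - c) * n := fun s hs => by
    rcases le_or_gt s n with hsn | hns
    · exact csInf_le hT (hST s hs hsn)
    · nlinarith
  rcases hc.eq_or_lt with rfl | hc0
  · simpa using hTle
  have : (sInf T - (1 - c) * n) / c ≤ sInf S :=
    le_csInf hSne fun s hs => by rw [div_le_iff₀ hc0]; linarith [hTS s hs]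
  rw [div_le_iff₀ hc0] at this
  linarith

theorem tendsto_rpow_nhdsGT_zero {c : ℝ} (hc : 0 < c) :
    Tendsto (fun δ : ℝ => δ ^ c) (𝓝[>] 0) (𝓝[>] 0) := by
  refine tendsto_nhdsWithin_iff.2 ⟨?_, eventually_mem_nhdsWithin.mono fun δ hδ =>
    Real.rpow_pos_of_pos hδ c⟩
  simpa [Real.zero_rpow hc.ne'] using
    (Real.continuousAt_rpow_const 0 c (Or.inr hc.le)).tendsto.mono_left nhdsWithin_le_nhds

theorem map_rpow_nhdsGT_zero {c : ℝ} (hc : 0 < c) :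
    map (fun δ : ℝ => δ ^ c) (𝓝[>] 0) = 𝓝[>] 0 := by
  have hinv : map ((fun δ : ℝ => δ ^ c) ∘ fun δ => δ ^ c⁻¹) (𝓝[>] 0) = 𝓝[>] 0 := by
    refine (map_congr (eventually_mem_nhdsWithin.mono fun δ (hδ : 0 < δ) => ?_)).trans map_id
    simp [← Real.rpow_mul hδ.le, inv_mul_cancel₀ hc.ne']
  refine le_antisymm (tendsto_rpow_nhdsGT_zero hc) ?_
  calc 𝓝[>] (0 : ℝ) = map (fun δ : ℝ => δ ^ c) (map (fun δ => δ ^ c⁻¹) (𝓝[>] 0)) := by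
        rw [map_map, hinv]
    _ ≤ map (fun δ : ℝ => δ ^ c) (𝓝[>] 0) := map_mono (tendsto_rpow_nhdsGT_zero (inv_pos.2 hc))

section PseudoMetricSpace

variable {X : Type*} [PseudoMetricSpace X]

theorem interCoverSum_of_forall_refinement {θ φ ρ δ s t ε C : ℝ} {F : Set X} (hC : 0 ≤ C)
    (h : interCoverSum θ ρ s ε F)
    (href : ∀ U : Set X, ediam U ≤ ENNReal.ofReal ρ →
      (θ ≠ 0 → ENNReal.ofReal (ρ ^ (1 / θ)) ≤ ediam U) →
      ∃ 𝒱 : Set (Set X), 𝒱.Countable ∧ U ⊆ ⋃₀ 𝒱 ∧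
        (∀ V ∈ 𝒱, ediam V ≤ ENNReal.ofReal δ ∧ (φ ≠ 0 → ENNReal.ofReal (δ ^ (1 / φ)) ≤ ediam V)) ∧
        ∑' V : 𝒱, ediam (V : Set X) ^ t ≤ ENNReal.ofReal C * ediam U ^ s) :
    interCoverSum φ δ t (C * ε) F := by
  obtain ⟨𝒰, h𝒰c, hF𝒰, h𝒰diam, h𝒰sum⟩ := h
  choose 𝒱 h𝒱c hU𝒱 h𝒱diam h𝒱sum using fun U : 𝒰 => href U (h𝒰diam U U.2).1 (h𝒰diam U U.2).2
  have : Countable 𝒰 := h𝒰c.to_subtype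
  refine ⟨⋃ U : 𝒰, 𝒱 U, countable_iUnion h𝒱c, ?_, ?_, ?_⟩
  · intro x hx
    obtain ⟨U, hU, hxU⟩ := hF𝒰 hx
    obtain ⟨V, hV, hxV⟩ := hU𝒱 ⟨U, hU⟩ hxU
    exact ⟨V, mem_iUnion.2 ⟨⟨U, hU⟩, hV⟩, hxV⟩
  · simp only [mem_iUnion]
    rintro V ⟨U, hV⟩
    exact h𝒱diam U V hV
  · calc ∑' V : ↥(⋃ U : 𝒰, 𝒱 U), ediam (V : Set X) ^ t
        ≤ ∑' U : 𝒰, ∑' V : 𝒱 U, ediam (V : Set X) ^ t :=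
          ENNReal.tsum_iUnion_le_tsum (fun V => ediam V ^ t) 𝒱
      _ ≤ ∑' U : 𝒰, ENNReal.ofReal C * ediam (U : Set X) ^ s := ENNReal.tsum_le_tsum h𝒱sum
      _ = ENNReal.ofReal C * ∑' U : 𝒰, ediam (U : Set X) ^ s := ENNReal.tsum_mul_left
      _ ≤ ENNReal.ofReal C * ENNReal.ofReal ε := by gcongr; exact h𝒰sum
      _ = ENNReal.ofReal (C * ε) := (ENNReal.ofReal_mul hC).symm

def upperInterDimSet (θ : ℝ) (F : Set X) : Set ℝ :=
  {s | 0 ≤ s ∧ ∀ ε > 0, ∀ᶠ δ in 𝓝[>] 0, interCoverSum θ δ s ε F}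

def lowerInterDimSet (θ : ℝ) (F : Set X) : Set ℝ :=
  {s | 0 ≤ s ∧ ∀ ε > 0, ∃ᶠ δ in 𝓝[>] 0, interCoverSum θ δ s ε F}

theorem upperInterDim_eq_sInf (θ : ℝ) (F : Set X) :
    upperInterDim θ F = sInf (upperInterDimSet θ F) := by
  simp only [upperInterDim, upperInterDimSet, (nhdsGT_basis_Ioc (0 : ℝ)).eventually_iff, mem_Ioc,
    and_imp]

theorem lowerInterDim_eq_sInf (θ : ℝ) (F : Set X) :
    lowerInterDim θ F = sInf (lowerInterDimSet θ F) := by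
  simp only [lowerInterDim, lowerInterDimSet, (nhdsGT_basis_Ioc (0 : ℝ)).frequently_iff, mem_Ioc,
    and_assoc]

theorem upperInterDimSet_subset_lowerInterDimSet (θ : ℝ) (F : Set X) :
    upperInterDimSet θ F ⊆ lowerInterDimSet θ F :=
  fun _ hs => ⟨hs.1, fun ε hε => (hs.2 ε hε).frequently⟩

theorem bddBelow_upperInterDimSet (θ : ℝ) (F : Set X) : BddBelow (upperInterDimSet θ F) :=
  ⟨0, fun _ hs => hs.1⟩

theorem bddBelow_lowerInterDimSet (θ : ℝ) (F : Set X) : BddBelow (lowerInterDimSet θ F) :=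
  ⟨0, fun _ hs => hs.1⟩

theorem interCoverSum_iff_of_subsingleton [Subsingleton X] {θ δ s ε : ℝ} {F : Set X}
    (hθ : θ ≠ 0) (hδ : 0 < δ) : interCoverSum θ δ s ε F ↔ F = ∅ := by
  constructor
  · rintro ⟨𝒰, -, hF𝒰, h𝒰diam, -⟩
    refine eq_empty_of_forall_notMem fun x hx => ?_
    obtain ⟨U, hU, -⟩ := hF𝒰 hx
    have : ENNReal.ofReal (δ ^ (1 / θ)) ≤ ediam U := (h𝒰diam U hU).2 hθ
    rw [ediam_subsingleton Set.subsingleton_of_subsingleton, nonpos_iff_eq_zero,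
      ENNReal.ofReal_eq_zero] at this
    exact (Real.rpow_pos_of_pos hδ _).not_ge this
  · rintro rfl
    exact ⟨∅, countable_empty, empty_subset _, by simp, by simp⟩

theorem sInf_setOf_nonneg_and (p : Prop) : sInf {s : ℝ | 0 ≤ s ∧ p} = 0 := by
  by_cases hp : p
  · simp only [hp, and_true]
    exact csInf_Ici
  · simp [hp]

theorem upperInterDim_of_subsingleton [Subsingleton X] {θ : ℝ} (hθ : θ ≠ 0) (F : Set X) :
    upperInterDim θ F = 0 := by
  have key (s ε : ℝ) : (∀ᶠ δ in 𝓝[>] 0, interCoverSum θ δ s ε F) ↔ F = ∅ := by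
    refine (eventually_congr ?_).trans eventually_const
    exact eventually_mem_nhdsWithin.mono fun δ hδ => interCoverSum_iff_of_subsingleton hθ hδ
  rw [upperInterDim_eq_sInf, ← sInf_setOf_nonneg_and (F = ∅)]
  congr 1
  ext s
  simp only [upperInterDimSet, mem_ofPred_eq, key]
  exact and_congr_right fun _ => ⟨fun h => h 1 one_pos, fun h _ _ => h⟩

theorem lowerInterDim_of_subsingleton [Subsingleton X] {θ : ℝ} (hθ : θ ≠ 0) (F : Set X) :
    lowerInterDim θ F = 0 := by
  have key (s ε : ℝ) : (∃ᶠ δ in 𝓝[>] 0, interCoverSum θ δ s ε F) ↔ F = ∅ := by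
    refine (frequently_congr ?_).trans frequently_const
    exact eventually_mem_nhdsWithin.mono fun δ hδ => interCoverSum_iff_of_subsingleton hθ hδ
  rw [lowerInterDim_eq_sInf, ← sInf_setOf_nonneg_and (F = ∅)]
  congr 1
  ext s
  simp only [lowerInterDimSet, mem_ofPred_eq, key]
  exact and_congr_right fun _ => ⟨fun h => h 1 one_pos, fun h _ _ => h⟩

end PseudoMetricSpace

section NormedSpace

variable {E : Type*} [NormedAddCommGroup E] [NormedSpace ℝ E]

theorem Metric.ediam_closedBall_eq [Nontrivial E] (x : E) {r : ℝ} (hr : 0 ≤ r) :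
    ediam (closedBall x r) = ENNReal.ofReal (2 * r) := by
  rw [← diam_closedBall_eq x hr, diam, ENNReal.ofReal_toReal isBounded_closedBall.ediam_ne_top]

variable [FiniteDimensional ℝ E]

theorem Finset.card_le_of_pairwise_le_dist [Nontrivial E] {s : Finset E} {x₀ : E} {r R : ℝ}
    (hr : 0 < r) (hR : 0 ≤ R) (hs : ∀ x ∈ s, dist x x₀ ≤ R)
    (hsep : (s : Set E).Pairwise (r ≤ dist · ·)) :
    (s.card : ℝ) ≤ (1 + 2 * R / r) ^ finrank ℝ E := by
  borelize E
  set μ : Measure E := Measure.addHaar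
  set d := finrank ℝ E
  have hdisj : (s : Set E).PairwiseDisjoint fun x => ball x (r / 2) := fun x hx y hy hxy =>
    ball_disjoint_ball (by linarith [hsep hx hy hxy])
  have hsub : (⋃ x ∈ s, ball x (r / 2)) ⊆ ball x₀ (R + r / 2) :=
    iUnion₂_subset fun x hx => ball_subset_ball' (by linarith [hs x hx])
  have hvol : ENNReal.ofReal (s.card * (r / 2) ^ d) * μ (ball 0 1)
      ≤ ENNReal.ofReal ((R + r / 2) ^ d) * μ (ball 0 1) :=
    calc ENNReal.ofReal (s.card * (r / 2) ^ d) * μ (ball 0 1)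
        = μ (⋃ x ∈ s, ball x (r / 2)) := by
          rw [measure_biUnion_finset hdisj fun _ _ => measurableSet_ball,
            Finset.sum_congr rfl fun x _ => Measure.addHaar_ball μ x (by positivity),
            Finset.sum_const, nsmul_eq_mul, ENNReal.ofReal_mul (by positivity),
            ENNReal.ofReal_natCast, mul_assoc]
      _ ≤ μ (ball x₀ (R + r / 2)) := measure_mono hsub
      _ = _ := Measure.addHaar_ball μ x₀ (by positivity)
  have hcard : s.card * (r / 2) ^ d ≤ (R + r / 2) ^ d := by
    rwa [ENNReal.mul_le_mul_iff_left (measure_ball_pos μ 0 one_pos).ne' measure_ball_lt_top.ne,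
      ENNReal.ofReal_le_ofReal_iff (by positivity)] at hvol
  calc (s.card : ℝ) ≤ (R + r / 2) ^ d / (r / 2) ^ d := by
        rwa [le_div_iff₀ (by positivity)]
    _ = (1 + 2 * R / r) ^ d := by
        rw [← div_pow]; congr 1; field_simp; ring

theorem packingNumber_le_floor_of_dist_le [Nontrivial E] {U : Set E} {r R : ℝ} (hr : 0 < r)
    (hR : 0 ≤ R) (hU : ∀ x ∈ U, ∀ y ∈ U, dist x y ≤ R) :
    packingNumber r.toNNReal U ≤ ⌊(1 + 2 * R / r) ^ finrank ℝ E⌋₊ := by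
  refine iSup₂_le fun C hCU => iSup_le fun hC => ?_
  by_contra! hlt
  obtain ⟨C', hC'C, hC'card⟩ := exists_subset_encard_eq (Order.add_one_le_of_lt hlt)
  have hfin : C'.Finite := finite_of_encard_eq_coe hC'card
  obtain ⟨x₀, hx₀⟩ : C'.Nonempty := by
    rw [← encard_pos, hC'card]; exact_mod_cast Nat.succ_pos _
  have hcard := Finset.card_le_of_pairwise_le_dist (s := hfin.toFinset) (x₀ := x₀) hr hR
    (fun x hx => hU x (hCU (hC'C (hfin.mem_toFinset.1 hx))) x₀ (hCU (hC'C hx₀)))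
    (by
      rw [hfin.coe_toFinset]
      intro x hx y hy hxy
      have : ENNReal.ofReal r < edist x y := hC (hC'C hx) (hC'C hy) hxy
      rw [edist_dist, ENNReal.ofReal_lt_ofReal_iff'] at this
      exact this.1.le)
  rw [← Set.ncard_eq_toFinset_card C' hfin, ncard_def, hC'card, ← ENat.natCast_one,
    ← ENat.natCast_add, ENat.toNat_natCast] at hcard
  push_cast at hcard
  linarith [Nat.lt_floor_add_one ((1 + 2 * R / r) ^ finrank ℝ E)]

theorem exists_finset_card_le_subset_iUnion_closedBall [Nontrivial E] {U : Set E} {r R : ℝ}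
    (hr : 0 < r) (hR : 0 ≤ R) (hU : ∀ x ∈ U, ∀ y ∈ U, dist x y ≤ R) :
    ∃ t : Finset E, (t.card : ℝ) ≤ (1 + 2 * R / r) ^ finrank ℝ E ∧
      U ⊆ ⋃ x ∈ t, closedBall x r := by
  have hpack := packingNumber_le_floor_of_dist_le (E := E) hr hR hU
  have hne : packingNumber r.toNNReal U ≠ ⊤ := ne_top_of_le_ne_top (ENat.natCast_ne_top _) hpack
  have hfin : (maximalSeparatedSet r.toNNReal U).Finite :=
    encard_ne_top_iff.1 (by rwa [encard_maximalSeparatedSet hne])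
  refine ⟨hfin.toFinset, ?_, ?_⟩
  · have : (hfin.toFinset.card : ℕ∞) ≤ ⌊(1 + 2 * R / r) ^ finrank ℝ E⌋₊ := by
      rwa [← hfin.encard_eq_coe_toFinset_card, encard_maximalSeparatedSet hne]
    exact (Nat.le_floor_iff (by positivity)).1 (by exact_mod_cast this)
  · simpa [Real.coe_toNNReal _ hr.le] using
      (isCover_maximalSeparatedSet hne).subset_iUnion_closedBall

theorem exists_cover_ediam_eq_tsum_le [Nontrivial E] {U : Set E} {δ R t : ℝ} (hδ : 0 < δ)
    (hδR : δ ≤ R) (hU : ∀ x ∈ U, ∀ y ∈ U, dist x y ≤ R) :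
    ∃ 𝒱 : Set (Set E), 𝒱.Countable ∧ U ⊆ ⋃₀ 𝒱 ∧ (∀ V ∈ 𝒱, ediam V = ENNReal.ofReal δ) ∧
      ∑' V : 𝒱, ediam (V : Set E) ^ t ≤
        ENNReal.ofReal (5 ^ finrank ℝ E * R ^ (finrank ℝ E : ℝ) * δ ^ (t - finrank ℝ E)) := by
  set n := finrank ℝ E
  have hR : 0 < R := hδ.trans_le hδR
  obtain ⟨T, hTcard, hTU⟩ := exists_finset_card_le_subset_iUnion_closedBall (half_pos hδ) hR.le hU
  have hcard : (T.card : ℝ) * δ ^ t ≤ 5 ^ n * R ^ (n : ℝ) * δ ^ (t - n) :=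
    calc (T.card : ℝ) * δ ^ t ≤ (5 * R / δ) ^ n * δ ^ t := by
          gcongr
          refine hTcard.trans (pow_le_pow_left₀ (by positivity) ?_ n)
          rw [div_div_eq_mul_div, one_add_div hδ.ne', div_le_div_iff_of_pos_right hδ]
          linarith
      _ = 5 ^ n * R ^ (n : ℝ) * δ ^ (t - n) := by
          rw [Real.rpow_sub hδ, Real.rpow_natCast, Real.rpow_natCast, div_pow, mul_pow]
          field_simp
  have hball : ∀ x : E, ediam (closedBall x (δ / 2)) = ENNReal.ofReal δ := fun x => by
    rw [ediam_closedBall_eq x (by positivity), mul_div_cancel₀ δ two_ne_zero]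
  refine ⟨↑(T.image fun x => closedBall x (δ / 2)), (T.image _).countable_toSet,
    by simpa [sUnion_image] using hTU, by simp [hball], ?_⟩
  rw [Finset.tsum_subtype' _ fun V => ediam V ^ t]
  calc ∑ V ∈ T.image fun x => closedBall x (δ / 2), ediam V ^ t
      ≤ ∑ x ∈ T, ediam (closedBall x (δ / 2)) ^ t :=
        Finset.sum_image_le_of_nonneg fun _ _ => zero_le
    _ = ENNReal.ofReal (T.card * δ ^ t) := by
        simp only [hball, Finset.sum_const, nsmul_eq_mul]
        rw [ENNReal.ofReal_mul (by positivity), ENNReal.ofReal_natCast,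
          ENNReal.ofReal_rpow_of_pos hδ]
    _ ≤ _ := ENNReal.ofReal_le_ofReal hcard

theorem exists_refinement_of_ediam_le [Nontrivial E] {U : Set E} {a δ ρ s t : ℝ}
    (haδ : a ≤ δ) (hδ : 0 < δ) (hδ1 : δ ≤ 1) (haU : ENNReal.ofReal a ≤ ediam U)
    (hUρ : ediam U ≤ ENNReal.ofReal ρ) (hst : s ≤ t) (hsn : s ≤ finrank ℝ E)
    (hρδ : ρ ^ (finrank ℝ E - s) * δ ^ (t - finrank ℝ E) ≤ 1) :
    ∃ 𝒱 : Set (Set E), 𝒱.Countable ∧ U ⊆ ⋃₀ 𝒱 ∧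
      (∀ V ∈ 𝒱, ediam V ≤ ENNReal.ofReal δ ∧ ENNReal.ofReal a ≤ ediam V) ∧
      ∑' V : 𝒱, ediam (V : Set E) ^ t ≤ ENNReal.ofReal (5 ^ finrank ℝ E) * ediam U ^ s := by
  set n := finrank ℝ E
  rcases le_or_gt (ediam U) (ENNReal.ofReal δ) with hUδ | hδU
  · refine ⟨{U}, countable_singleton U, by simp, by simpa using ⟨hUδ, haU⟩, ?_⟩
    rw [tsum_singleton U fun V => ediam V ^ t]
    calc ediam U ^ t ≤ ediam U ^ s :=
          ENNReal.rpow_le_rpow_of_exponent_ge (hUδ.trans (ENNReal.ofReal_le_one.2 hδ1)) hst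
      _ ≤ ENNReal.ofReal (5 ^ n) * ediam U ^ s :=
          le_mul_of_one_le_left' (ENNReal.one_le_ofReal.2 (one_le_pow₀ (by norm_num)))
  have hUtop : ediam U ≠ ⊤ := ne_top_of_le_ne_top ENNReal.ofReal_ne_top hUρ
  have hU : Bornology.IsBounded U := isBounded_iff_ediam_ne_top.2 hUtop
  set d := diam U
  have hediam : ediam U = ENNReal.ofReal d := (ENNReal.ofReal_toReal hUtop).symm
  rw [hediam] at hδU hUρ ⊢
  have hδd : δ ≤ d := ((ENNReal.ofReal_lt_ofReal_iff_of_nonneg hδ.le).1 hδU).le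
  have hd : 0 < d := hδ.trans_le hδd
  have hdρ : d ≤ ρ := ENNReal.ofReal_le_ofReal_iff'.1 hUρ |>.resolve_right (by linarith)
  obtain ⟨𝒱, h𝒱c, hU𝒱, h𝒱diam, h𝒱sum⟩ :=
    exists_cover_ediam_eq_tsum_le (t := t) hδ hδd fun x hx y hy => dist_le_diam_of_mem hU hx hy
  refine ⟨𝒱, h𝒱c, hU𝒱, fun V hV => ?_, h𝒱sum.trans ?_⟩
  · rw [h𝒱diam V hV]
    exact ⟨le_rfl, ENNReal.ofReal_le_ofReal haδ⟩
  rw [ENNReal.ofReal_rpow_of_pos hd, ← ENNReal.ofReal_mul (by positivity)]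
  refine ENNReal.ofReal_le_ofReal ?_
  calc 5 ^ n * d ^ (n : ℝ) * δ ^ (t - n) = 5 ^ n * d ^ s * (d ^ (n - s) * δ ^ (t - n)) := by
        rw [← mul_assoc, mul_assoc _ (d ^ s), ← Real.rpow_add hd, add_sub_cancel]
    _ ≤ 5 ^ n * d ^ s * (ρ ^ (n - s) * δ ^ (t - n)) := by gcongr
    _ ≤ 5 ^ n * d ^ s := mul_le_of_le_one_right (by positivity) hρδ

theorem interCoverSum_of_interCoverSum_rpow [Nontrivial E] {θ φ δ s ε : ℝ} {F : Set E}
    (hθ : 0 < θ) (hθφ : θ < φ) (hφ : φ ≤ 1) (hsn : s ≤ finrank ℝ E) (hδ : 0 < δ) (hδ1 : δ ≤ 1)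
    (h : interCoverSum θ (δ ^ (θ / φ)) s ε F) :
    interCoverSum φ δ (θ / φ * s + (1 - θ / φ) * finrank ℝ E) (5 ^ finrank ℝ E * ε) F := by
  set n := finrank ℝ E
  have hφ0 : 0 < φ := hθ.trans hθφ
  have hc1 : θ / φ < 1 := (div_lt_one hφ0).2 hθφ
  have hlower : (δ ^ (θ / φ)) ^ (1 / θ) = δ ^ (1 / φ) := by
    rw [← Real.rpow_mul hδ.le]
    congr 1
    field_simp
  have hbalance : (δ ^ (θ / φ)) ^ (n - s) * δ ^ (θ / φ * s + (1 - θ / φ) * n - n) = 1 := by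
    rw [← Real.rpow_mul hδ.le, ← Real.rpow_add hδ]
    convert Real.rpow_zero δ using 2
    ring
  refine interCoverSum_of_forall_refinement (by positivity) h fun U hUρ hUa => ?_
  obtain ⟨𝒱, h𝒱c, hU𝒱, h𝒱diam, h𝒱sum⟩ := exists_refinement_of_ediam_le
    (Real.rpow_le_self_of_le_one hδ.le hδ1 (one_le_one_div hφ0 hφ)) hδ hδ1
    (hlower ▸ hUa hθ.ne') hUρ (by nlinarith) hsn hbalance.le
  exact ⟨𝒱, h𝒱c, hU𝒱, fun V hV => ⟨(h𝒱diam V hV).1, fun _ => (h𝒱diam V hV).2⟩, h𝒱sum⟩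

theorem mul_add_mem_upperInterDimSet [Nontrivial E] {θ φ s : ℝ} {F : Set E} (hθ : 0 < θ)
    (hθφ : θ < φ) (hφ : φ ≤ 1) (hs : s ∈ upperInterDimSet θ F) (hsn : s ≤ finrank ℝ E) :
    θ / φ * s + (1 - θ / φ) * finrank ℝ E ∈ upperInterDimSet φ F := by
  have hc0 : 0 < θ / φ := div_pos hθ (hθ.trans hθφ)
  have hc1 : θ / φ < 1 := (div_lt_one (hθ.trans hθφ)).2 hθφ
  refine ⟨by nlinarith [hs.1], fun ε hε => ?_⟩
  have h := hs.2 (ε / 5 ^ finrank ℝ E) (by positivity)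
  rw [← map_rpow_nhdsGT_zero hc0, eventually_map] at h
  filter_upwards [h, eventually_mem_nhdsWithin, Ioc_mem_nhdsGT one_pos] with δ hδ hδ0 hδ1
  simpa [mul_div_cancel₀] using
    interCoverSum_of_interCoverSum_rpow hθ hθφ hφ hsn hδ0 hδ1.2 hδ

theorem mul_add_mem_lowerInterDimSet [Nontrivial E] {θ φ s : ℝ} {F : Set E} (hθ : 0 < θ)
    (hθφ : θ < φ) (hφ : φ ≤ 1) (hs : s ∈ lowerInterDimSet θ F) (hsn : s ≤ finrank ℝ E) :
    θ / φ * s + (1 - θ / φ) * finrank ℝ E ∈ lowerInterDimSet φ F := by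
  have hc0 : 0 < θ / φ := div_pos hθ (hθ.trans hθφ)
  have hc1 : θ / φ < 1 := (div_lt_one (hθ.trans hθφ)).2 hθφ
  refine ⟨by nlinarith [hs.1], fun ε hε => ?_⟩
  have h := hs.2 (ε / 5 ^ finrank ℝ E) (by positivity)
  rw [← map_rpow_nhdsGT_zero hc0, frequently_map] at h
  refine (h.and_eventually (eventually_mem_nhdsWithin.and (Ioc_mem_nhdsGT one_pos))).mono ?_
  rintro δ ⟨hδ, hδ0, hδ1⟩
  simpa [mul_div_cancel₀] using
    interCoverSum_of_interCoverSum_rpow hθ hθφ hφ hsn hδ0 hδ1.2 hδ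

theorem natCast_add_mem_upperInterDimSet [Nontrivial E] {θ η : ℝ} {F : Set E} (hθ : 0 < θ)
    (hθ1 : θ ≤ 1) (hF : Bornology.IsBounded F) (hη : 0 < η) :
    (finrank ℝ E : ℝ) + η ∈ upperInterDimSet θ F := by
  set n := finrank ℝ E
  set R := max (diam F) 1
  refine ⟨by positivity, fun ε hε => ?_⟩
  have hsmall : ∀ᶠ δ in 𝓝[>] 0, 5 ^ n * R ^ (n : ℝ) * δ ^ η ≤ ε := by
    have := ((tendsto_rpow_nhdsGT_zero hη).mono_right nhdsWithin_le_nhds).const_mul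
      (5 ^ n * R ^ (n : ℝ))
    rw [mul_zero] at this
    exact this.eventually (ge_mem_nhds hε)
  filter_upwards [hsmall, eventually_mem_nhdsWithin, Ioc_mem_nhdsGT one_pos] with δ hε' hδ hδ1
  obtain ⟨𝒱, h𝒱c, hF𝒱, h𝒱diam, h𝒱sum⟩ := exists_cover_ediam_eq_tsum_le (t := n + η) hδ
    (hδ1.2.trans (le_max_right _ _))
    fun x hx y hy => (dist_le_diam_of_mem hF hx hy).trans (le_max_left _ _)
  refine ⟨𝒱, h𝒱c, hF𝒱, fun V hV => ?_, h𝒱sum.trans (ENNReal.ofReal_le_ofReal ?_)⟩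
  · change ediam V ≤ _ ∧ (_ → _ ≤ ediam V)
    rw [h𝒱diam V hV]
    exact ⟨le_rfl, fun _ => ENNReal.ofReal_le_ofReal
      (Real.rpow_le_self_of_le_one hδ.le hδ1.2 (one_le_one_div hθ hθ1))⟩
  · rwa [add_sub_cancel_left]

theorem upperInterDim_le [Nontrivial E] {θ φ : ℝ} {F : Set E} (hF : Bornology.IsBounded F)
    (hθ : 0 < θ) (hθφ : θ < φ) (hφ : φ ≤ 1) :
    upperInterDim φ F ≤ θ / φ * upperInterDim θ F + (1 - θ / φ) * finrank ℝ E := by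
  have hφ0 : 0 < φ := hθ.trans hθφ
  rw [upperInterDim_eq_sInf, upperInterDim_eq_sInf]
  exact csInf_le_mul_csInf_add (div_pos hθ hφ0).le
    ⟨_, natCast_add_mem_upperInterDimSet hθ (hθφ.le.trans hφ) hF one_pos⟩
    (bddBelow_upperInterDimSet φ F) (fun η hη => natCast_add_mem_upperInterDimSet hφ0 hφ hF hη)
    fun s hs hsn => mul_add_mem_upperInterDimSet hθ hθφ hφ hs hsn

theorem lowerInterDim_le [Nontrivial E] {θ φ : ℝ} {F : Set E} (hF : Bornology.IsBounded F)
    (hθ : 0 < θ) (hθφ : θ < φ) (hφ : φ ≤ 1) :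
    lowerInterDim φ F ≤ θ / φ * lowerInterDim θ F + (1 - θ / φ) * finrank ℝ E := by
  have hφ0 : 0 < φ := hθ.trans hθφ
  rw [lowerInterDim_eq_sInf, lowerInterDim_eq_sInf]
  exact csInf_le_mul_csInf_add (div_pos hθ hφ0).le
    ⟨_, upperInterDimSet_subset_lowerInterDimSet θ F
      (natCast_add_mem_upperInterDimSet hθ (hθφ.le.trans hφ) hF one_pos)⟩
    (bddBelow_lowerInterDimSet φ F)
    (fun η hη => upperInterDimSet_subset_lowerInterDimSet φ F
      (natCast_add_mem_upperInterDimSet hφ0 hφ hF hη))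
    fun s hs hsn => mul_add_mem_lowerInterDimSet hθ hθφ hφ hs hsn

end NormedSpace

theorem stmt7 (n : ℕ) (F : Set (EuclideanSpace ℝ (Fin n)))
    (hF : Bornology.IsBounded F) (θ φ : ℝ)
    (hθ : 0 < θ) (hθφ : θ < φ) (hφ : φ ≤ 1) :
    upperInterDim φ F ≤ upperInterDim θ F + (1 - θ / φ) * (n - upperInterDim θ F) ∧
    lowerInterDim φ F ≤ lowerInterDim θ F + (1 - θ / φ) * (n - lowerInterDim θ F) := by
  rcases Nat.eq_zero_or_pos n with rfl | hn
  · have hφ0 : φ ≠ 0 := (hθ.trans hθφ).ne'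
    simp [upperInterDim_of_subsingleton, lowerInterDim_of_subsingleton, hθ.ne', hφ0]
  have : NeZero n := ⟨hn.ne'⟩
  have hdim : (finrank ℝ (EuclideanSpace ℝ (Fin n)) : ℝ) = n := by rw [finrank_euclideanSpace_fin]
  constructor
  · linarith [hdim ▸ upperInterDim_le hF hθ hθφ hφ]
  · linarith [hdim ▸ lowerInterDim_le hF hθ hθφ hφ]
end

section
/- For every bounded set F ⊆ ℝⁿ, the maps θ ↦ (lower θ-intermediate dimension of F) and θ ↦ (upper θ-intermediate dimension of F) are continuous on (0,1]. -/
open Set Metric MeasureTheory ENNReal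

/-!
For `0 < θ ≤ φ ≤ 1` and scales `δ ≤ 1`, every admissible cover for `φ` is admissible for `θ`,
so `dim_θ F ≤ dim_φ F`. Conversely, enlarge each set of a `θ`-cover at scale `δ` to a ball of
diameter at least `(2δ)^(1/φ)`: a set of diameter `d ≥ δ^(1/θ)` contributes `d^s ≥ δ^(s/θ)`,
which pays (up to the factor `2^(s/θ)`) for the ball's contribution with exponent `(φ/θ) s`.
Hence `dim_φ F ≤ (φ/θ) dim_θ F`, and the two-sided estimate
`dim_θ F ≤ dim_φ F ≤ (φ/θ) dim_θ F` squeezes `dim_φ F` to `dim_θ F` as `φ → θ`.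
-/

open Filter Topology

/-- `hTS` makes `S` empty only when `T` is, so the junk value `sInf ∅ = 0` never breaks
the inequalities. -/
lemma Real.sInf_le_sInf_and_sInf_le_mul_sInf {S T : Set ℝ} {a : ℝ} (ha : 0 ≤ a)
    (hT : ∀ t ∈ T, 0 ≤ t) (hST : S ⊆ T) (hTS : ∀ t ∈ T, a * t ∈ S) :
    sInf T ≤ sInf S ∧ sInf S ≤ a * sInf T := by
  rcases T.eq_empty_or_nonempty with rfl | ⟨t, ht⟩
  · simp [subset_empty_iff.1 hST]
  have hS : S.Nonempty := ⟨a * t, hTS t ht⟩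
  have hTbdd : BddBelow T := ⟨0, hT⟩
  refine ⟨csInf_le_csInf hTbdd hS hST, ?_⟩
  rw [← smul_eq_mul, ← Real.sInf_smul_of_nonneg ha]
  exact csInf_le_csInf ⟨0, fun s hs => hT s (hST hs)⟩ (Set.Nonempty.smul_set ⟨t, ht⟩)
    (Set.smul_set_subset_iff.2 hTS)

lemma continuousOn_of_le_of_le_div_mul {g : ℝ → ℝ} {I : Set ℝ} (hI : I ⊆ Ioi 0)
    (hg : ∀ θ ∈ I, ∀ φ ∈ I, θ ≤ φ → g θ ≤ g φ ∧ g φ ≤ φ / θ * g θ) : ContinuousOn g I := by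
  intro θ₀ h₀
  have hθ₀ : 0 < θ₀ := hI h₀
  let ratio : ℝ → ℝ := fun θ => θ / θ₀ * g θ₀
  have hratio : Tendsto ratio (𝓝[I] θ₀) (𝓝 (g θ₀)) := by
    have : Continuous ratio := by fun_prop
    simpa [ratio, hθ₀.ne'] using (this.tendsto θ₀).mono_left nhdsWithin_le_nhds
  have hbounds : ∀ θ ∈ I, min (g θ₀) (ratio θ) ≤ g θ ∧ g θ ≤ max (g θ₀) (ratio θ) := by
    intro θ hθ
    rcases le_total θ θ₀ with hle | hle
    · have hθ0 : 0 < θ := hI hθ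
      obtain ⟨hmono, hscale⟩ := hg θ hθ θ₀ h₀ hle
      refine ⟨min_le_of_right_le ?_, le_max_of_le_left hmono⟩
      calc θ / θ₀ * g θ₀ ≤ θ / θ₀ * (θ₀ / θ * g θ) := by gcongr
        _ = g θ := by field_simp
    · obtain ⟨hmono, hscale⟩ := hg θ₀ h₀ θ hθ hle
      exact ⟨min_le_of_left_le hmono, le_max_of_le_right hscale⟩
  refine tendsto_of_tendsto_of_tendsto_of_le_of_le' ?_ ?_
    (eventually_nhdsWithin_of_forall fun θ hθ => (hbounds θ hθ).1)
    (eventually_nhdsWithin_of_forall fun θ hθ => (hbounds θ hθ).2)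
  · simpa using (tendsto_const_nhds (x := g θ₀)).min hratio
  · simpa using (tendsto_const_nhds (x := g θ₀)).max hratio

section SmallScales

variable {P Q : ℝ → ℝ → Prop} {a C : ℝ}

lemma exists_small_scale_of_imp (ha : 0 < a) (hC : 0 < C)
    (h : ∀ δ ε, 0 < δ → a * δ ≤ 1 → Q δ ε → P (a * δ) (C * ε))
    (hQ : ∀ ε > 0, ∀ δ₀ > 0, ∃ δ, 0 < δ ∧ δ ≤ δ₀ ∧ Q δ ε) :
    ∀ ε > 0, ∀ δ₀ > 0, ∃ δ, 0 < δ ∧ δ ≤ δ₀ ∧ P δ ε := by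
  intro ε hε δ₀ hδ₀
  obtain ⟨δ, hδ, hδle, hQδ⟩ := hQ (ε / C) (by positivity) (min δ₀ 1 / a) (by positivity)
  have haδ : a * δ ≤ min δ₀ 1 := (le_div_iff₀' ha).1 hδle
  refine ⟨a * δ, by positivity, haδ.trans (min_le_left _ _), ?_⟩
  simpa [mul_div_cancel₀ _ hC.ne'] using h δ _ hδ (haδ.trans (min_le_right _ _)) hQδ

lemma forall_small_scale_of_imp (ha : 0 < a) (hC : 0 < C)
    (h : ∀ δ ε, 0 < δ → a * δ ≤ 1 → Q δ ε → P (a * δ) (C * ε))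
    (hQ : ∀ ε > 0, ∃ δ₀ > 0, ∀ δ, 0 < δ → δ ≤ δ₀ → Q δ ε) :
    ∀ ε > 0, ∃ δ₀ > 0, ∀ δ, 0 < δ → δ ≤ δ₀ → P δ ε := by
  intro ε hε
  obtain ⟨δ₀, hδ₀, hQδ⟩ := hQ (ε / C) (by positivity)
  refine ⟨a * min δ₀ (1 / a), by positivity, fun δ hδ hδle => ?_⟩
  have hδa : δ / a ≤ min δ₀ (1 / a) := (div_le_iff₀' ha).2 hδle
  have hδ1 : a * (δ / a) ≤ 1 := (le_div_iff₀' ha).1 (hδa.trans (min_le_right _ _))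
  simpa [mul_div_cancel₀ _ ha.ne', mul_div_cancel₀ _ hC.ne'] using
    h _ _ (by positivity) hδ1 (hQδ _ (by positivity) (hδa.trans (min_le_left _ _)))

end SmallScales

lemma interCoverSum.of_le {X : Type*} [PseudoMetricSpace X] {θ φ δ s ε : ℝ} {F : Set X}
    (hθ : 0 < θ) (hθφ : θ ≤ φ) (hδ : 0 < δ) (hδ1 : δ ≤ 1) (h : interCoverSum φ δ s ε F) :
    interCoverSum θ δ s ε F := by
  obtain ⟨𝒰, h𝒰c, hcov, hdiam, hsum⟩ := h
  refine ⟨𝒰, h𝒰c, hcov, fun U hU => ⟨(hdiam U hU).1, fun _ => ?_⟩, hsum⟩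
  refine le_trans (ENNReal.ofReal_le_ofReal ?_) ((hdiam U hU).2 (hθ.trans_le hθφ).ne')
  exact Real.rpow_le_rpow_of_exponent_ge hδ hδ1 (one_div_le_one_div_of_le hθ hθφ)

lemma rpow_two_mul_max_le {θ φ s δ d : ℝ} (hθ : 0 < θ) (hθφ : θ ≤ φ) (hφ1 : φ ≤ 1)
    (hs : 0 ≤ s) (hδ : 0 < δ) (hd : δ ^ (1 / θ) ≤ d) (hd1 : d ≤ 1) :
    (2 * max d ((2 * δ) ^ (1 / φ) / 2)) ^ (φ / θ * s) ≤ 2 ^ (s / θ) * d ^ s := by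
  have hφ : 0 < φ := hθ.trans_le hθφ
  have hd0 : 0 < d := (by positivity : 0 < δ ^ (1 / θ)).trans_le hd
  have hst : s ≤ φ / θ * s := le_mul_of_one_le_left hs ((one_le_div hθ).2 hθφ)
  rw [mul_max_of_nonneg _ _ zero_le_two, mul_div_cancel₀ _ two_ne_zero]
  rcases le_total (2 * d) ((2 * δ) ^ (1 / φ)) with hle | hle
  · rw [max_eq_right hle, ← Real.rpow_mul (by positivity), Real.mul_rpow zero_le_two hδ.le]
    have hexp : 1 / φ * (φ / θ * s) = s / θ := by field_simp
    rw [hexp]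
    gcongr
    calc δ ^ (s / θ) = (δ ^ (1 / θ)) ^ s := by rw [← Real.rpow_mul hδ.le]; ring_nf
      _ ≤ d ^ s := by gcongr
  · rw [max_eq_left hle, Real.mul_rpow zero_le_two hd0.le]
    have htwo : (2 : ℝ) ^ (φ / θ * s) ≤ 2 ^ (s / θ) :=
      Real.rpow_le_rpow_of_exponent_le one_le_two (by
        rw [div_mul_eq_mul_div, div_le_div_iff_of_pos_right hθ]
        exact mul_le_of_le_one_left hs hφ1)
    exact mul_le_mul htwo (Real.rpow_le_rpow_of_exponent_ge hd0 hd1 hst) (by positivity)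
      (by positivity)

lemma exists_closedBall_superset_ediam_eq {E : Type*} [NormedAddCommGroup E] [NormedSpace ℝ E]
    {U : Set E} (hU : U.Nontrivial) {r : ℝ} (hr : ediam U ≤ ENNReal.ofReal r) :
    ∃ x, U ⊆ closedBall x r ∧ ediam (closedBall x r) = ENNReal.ofReal (2 * r) := by
  obtain ⟨x, hx, y, hy, hxy⟩ := hU
  have : Nontrivial E := ⟨⟨x, y, hxy⟩⟩
  have hr0 : 0 ≤ r := by
    by_contra! hneg
    rw [ENNReal.ofReal_of_nonpos hneg.le, nonpos_iff_eq_zero, ediam_eq_zero_iff] at hr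
    exact hxy (hr hx hy)
  refine ⟨x, fun z hz => ?_, ?_⟩
  · exact mem_closedBall.2 ((edist_le_ofReal hr0).1 ((edist_le_ediam_of_mem hz hx).trans hr))
  · rw [← diam_closedBall_eq x hr0, diam, ENNReal.ofReal_toReal isBounded_closedBall.ediam_ne_top]

lemma interCoverSum.scale {E : Type*} [NormedAddCommGroup E] [NormedSpace ℝ E]
    {θ φ δ s ε : ℝ} {F : Set E} (hθ : 0 < θ) (hθφ : θ ≤ φ) (hφ1 : φ ≤ 1) (hs : 0 ≤ s)
    (hδ : 0 < δ) (hδ1 : 2 * δ ≤ 1) (h : interCoverSum θ δ s ε F) :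
    interCoverSum φ (2 * δ) (φ / θ * s) (2 ^ (s / θ) * ε) F := by
  obtain ⟨𝒰, h𝒰c, hcov, hdiam, hsum⟩ := h
  simp only [interCoverSum, EMetric.diam] at hdiam hsum ⊢
  have hφ : 0 < φ := hθ.trans_le hθφ
  have hdiam' : ∀ U ∈ 𝒰, ediam U = ENNReal.ofReal (diam U) ∧ δ ^ (1 / θ) ≤ diam U ∧ diam U ≤ δ := by
    intro U hU
    have hfin : ediam U ≠ ⊤ := ((hdiam U hU).1.trans_lt ofReal_lt_top).ne
    have hU := hdiam U hU
    rw [← ENNReal.ofReal_toReal hfin] at hU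
    exact ⟨(ENNReal.ofReal_toReal hfin).symm,
      (ENNReal.ofReal_le_ofReal_iff ENNReal.toReal_nonneg).1 (hU.2 hθ.ne'),
      (ENNReal.ofReal_le_ofReal_iff hδ.le).1 hU.1⟩
  set r : Set E → ℝ := fun U => max (diam U) ((2 * δ) ^ (1 / φ) / 2) with hr
  have hball : ∀ U ∈ 𝒰, ∃ x, U ⊆ closedBall x (r U) ∧
      ediam (closedBall x (r U)) = ENNReal.ofReal (2 * r U) := by
    intro U hU
    refine exists_closedBall_superset_ediam_eq ?_ ?_
    · refine ediam_pos_iff.1 ((hdiam' U hU).1 ▸ ENNReal.ofReal_pos.2 ?_)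
      exact (by positivity : 0 < δ ^ (1 / θ)).trans_le (hdiam' U hU).2.1
    · exact (hdiam' U hU).1 ▸ ENNReal.ofReal_le_ofReal (le_max_left _ _)
  choose! x hxU hxdiam using hball
  let B : Set E → Set E := fun U => closedBall (x U) (r U)
  refine ⟨B '' 𝒰, h𝒰c.image B, ?_, ?_, ?_⟩
  · intro y hy
    obtain ⟨U, hU, hyU⟩ := hcov hy
    exact ⟨B U, mem_image_of_mem B hU, hxU U hU hyU⟩
  · rintro _ ⟨U, hU, rfl⟩
    rw [show ediam (B U) = _ from hxdiam U hU]
    refine ⟨ENNReal.ofReal_le_ofReal ?_, fun _ => ENNReal.ofReal_le_ofReal ?_⟩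
    · have hpow : (2 * δ) ^ (1 / φ) ≤ 2 * δ :=
        Real.rpow_le_self_of_le_one (by positivity) hδ1 ((one_le_div hφ).2 hφ1)
      simp only [hr]
      rw [mul_max_of_nonneg _ _ zero_le_two]
      exact max_le (by linarith [(hdiam' U hU).2.2]) (by linarith)
    · simp only [hr]
      rw [mul_max_of_nonneg _ _ zero_le_two]
      exact le_max_of_le_right (by linarith)
  · have hterm : ∀ U : 𝒰, ediam (B U) ^ (φ / θ * s) ≤
        ENNReal.ofReal (2 ^ (s / θ)) * ediam (U : Set E) ^ s := by
      rintro ⟨U, hU⟩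
      obtain ⟨hU_eq, hU_low, hU_le⟩ := hdiam' U hU
      rw [show ediam (B U) = _ from hxdiam U hU, hU_eq,
        ENNReal.ofReal_rpow_of_nonneg (by positivity) (by positivity),
        ENNReal.ofReal_rpow_of_nonneg diam_nonneg hs, ← ENNReal.ofReal_mul (by positivity)]
      exact ENNReal.ofReal_le_ofReal
        (rpow_two_mul_max_le hθ hθφ hφ1 hs hδ hU_low (by linarith))
    calc ∑' V : B '' 𝒰, ediam (V : Set E) ^ (φ / θ * s)
        ≤ ∑' U : 𝒰, ediam (B U) ^ (φ / θ * s) :=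
          ENNReal.tsum_le_tsum_comp_of_surjective Set.imageFactorization_surjective _
      _ ≤ ∑' U : 𝒰, ENNReal.ofReal (2 ^ (s / θ)) * ediam (U : Set E) ^ s :=
          ENNReal.tsum_le_tsum hterm
      _ = ENNReal.ofReal (2 ^ (s / θ)) * ∑' U : 𝒰, ediam (U : Set E) ^ s := ENNReal.tsum_mul_left
      _ ≤ ENNReal.ofReal (2 ^ (s / θ)) * ENNReal.ofReal ε := by gcongr
      _ = ENNReal.ofReal (2 ^ (s / θ) * ε) := (ENNReal.ofReal_mul (by positivity)).symm

section TwoSidedEstimate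

variable {E : Type*} [NormedAddCommGroup E] [NormedSpace ℝ E] {θ φ : ℝ} {F : Set E}

theorem lowerInterDim_le_and_le_div_mul (hθ : 0 < θ) (hθφ : θ ≤ φ) (hφ1 : φ ≤ 1) :
    lowerInterDim θ F ≤ lowerInterDim φ F ∧ lowerInterDim φ F ≤ φ / θ * lowerInterDim θ F := by
  have hφθ : 0 ≤ φ / θ := div_nonneg (hθ.le.trans hθφ) hθ.le
  refine Real.sInf_le_sInf_and_sInf_le_mul_sInf hφθ (fun s hs => hs.1) ?_ ?_
  · rintro s ⟨hs, hcov⟩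
    exact ⟨hs, exists_small_scale_of_imp one_pos one_pos
      (fun δ ε hδ hδ1 h => by simpa using h.of_le hθ hθφ hδ (by simpa using hδ1)) hcov⟩
  · rintro s ⟨hs, hcov⟩
    exact ⟨mul_nonneg hφθ hs, exists_small_scale_of_imp two_pos (by positivity)
      (fun δ ε hδ hδ1 h => h.scale hθ hθφ hφ1 hs hδ hδ1) hcov⟩

theorem upperInterDim_le_and_le_div_mul (hθ : 0 < θ) (hθφ : θ ≤ φ) (hφ1 : φ ≤ 1) :
    upperInterDim θ F ≤ upperInterDim φ F ∧ upperInterDim φ F ≤ φ / θ * upperInterDim θ F := by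
  have hφθ : 0 ≤ φ / θ := div_nonneg (hθ.le.trans hθφ) hθ.le
  refine Real.sInf_le_sInf_and_sInf_le_mul_sInf hφθ (fun s hs => hs.1) ?_ ?_
  · rintro s ⟨hs, hcov⟩
    exact ⟨hs, forall_small_scale_of_imp one_pos one_pos
      (fun δ ε hδ hδ1 h => by simpa using h.of_le hθ hθφ hδ (by simpa using hδ1)) hcov⟩
  · rintro s ⟨hs, hcov⟩
    exact ⟨mul_nonneg hφθ hs, forall_small_scale_of_imp two_pos (by positivity)
      (fun δ ε hδ hδ1 h => h.scale hθ hθφ hφ1 hs hδ hδ1) hcov⟩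

end TwoSidedEstimate

theorem stmt8_general (n : ℕ) (F : Set (EuclideanSpace ℝ (Fin n))) :
    ContinuousOn (fun θ => lowerInterDim θ F) (Set.Ioc (0:ℝ) 1) ∧
    ContinuousOn (fun θ => upperInterDim θ F) (Set.Ioc (0:ℝ) 1) :=
  ⟨continuousOn_of_le_of_le_div_mul (fun _ hθ => hθ.1)
      fun _ hθ _ hφ hθφ => lowerInterDim_le_and_le_div_mul hθ.1 hθφ hφ.2,
    continuousOn_of_le_of_le_div_mul (fun _ hθ => hθ.1)
      fun _ hθ _ hφ hθφ => upperInterDim_le_and_le_div_mul hθ.1 hθφ hφ.2⟩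

theorem stmt8 (n : ℕ) (F : Set (EuclideanSpace ℝ (Fin n)))
    (hF : Bornology.IsBounded F) :
    ContinuousOn (fun θ => lowerInterDim θ F) (Set.Ioc (0:ℝ) 1) ∧
    ContinuousOn (fun θ => upperInterDim θ F) (Set.Ioc (0:ℝ) 1) :=
  stmt8_general n F
end
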